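/- Let ψ : ℂ[y₀,y₁,y₂,y₃,y₄] → ℂ[x₀,x₁,x₂,x₃,x₄] be the ℂ-algebra homomorphism determined by ψ(y₀) = x₀, ψ(y₁) = x₁² − x₀x₂, ψ(y₂) = x₂² + (1/3)x₀x₄ − (4/3)x₁x₃, ψ(y₃) = x₁³ + (1/2)x₀²x₃ − (3/2)x₀x₁x₂, ψ(y₄) = x₂³ − 2x₁x₂x₃ + x₀x₃² + x₁²x₄ − x₀x₂x₄. Then the kernel of ψ is the principal ideal generated by 4y₃² − 4y₁³ − y₀³y₄ + 3y₀²y₁y₂. Consequently the image of ψ (the invariant ring of the ℂ⁺-action on Sym⁴(ℂ²)) is isomorphic to ℂ[y₀,…,y₄]/(4y₃² − 4y₁³ − y₀³y₄ + 3y₀²y₁y₂), the coordinate ring of a degree-6 hypersurface in the weighted projective space ℙ(1,2,2,3,3). -/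

import Mathlib

/-! Modulo `rel` we have `y₀³y₄ ≡ 4y₃² − 4y₁³ + 3y₀²y₁y₂`, so some power of `y₀` times any
polynomial is congruent to a polynomial in `y₀, …, y₃` alone. The images of `y₀, …, y₃` under `ψ`
are algebraically independent (already on the slice `x₁ = 0`), so for `f` in the kernel that
polynomial vanishes and `rel ∣ y₀ᴺ f`. As `y₀` is prime and does not divide `rel`, `rel ∣ f`. -/

open MvPolynomial

/-- The `ℂ`-algebra homomorphism `ψ : ℂ[y₀,y₁,y₂,y₃,y₄] → ℂ[x₀,x₁,x₂,x₃,x₄]` sending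
`y₀ ↦ x₀`, `y₁ ↦ x₁² − x₀x₂`, `y₂ ↦ x₂² + (1/3)x₀x₄ − (4/3)x₁x₃`,
`y₃ ↦ x₁³ + (1/2)x₀²x₃ − (3/2)x₀x₁x₂`,
`y₄ ↦ x₂³ − 2x₁x₂x₃ + x₀x₃² + x₁²x₄ − x₀x₂x₄`. -/
noncomputable def psi :
    MvPolynomial (Fin 5) ℂ →ₐ[ℂ] MvPolynomial (Fin 5) ℂ :=
  aeval ![X 0,
          X 1 ^ 2 - X 0 * X 2,
          X 2 ^ 2 + C (1 / 3 : ℂ) * X 0 * X 4 - C (4 / 3 : ℂ) * X 1 * X 3,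
          X 1 ^ 3 + C (1 / 2 : ℂ) * X 0 ^ 2 * X 3 - C (3 / 2 : ℂ) * X 0 * X 1 * X 2,
          X 2 ^ 3 - C (2 : ℂ) * X 1 * X 2 * X 3 + X 0 * X 3 ^ 2 + X 1 ^ 2 * X 4
            - X 0 * X 2 * X 4]

/-- The relation `4y₃² − 4y₁³ − y₀³y₄ + 3y₀²y₁y₂` among the five generators. -/
noncomputable def rel : MvPolynomial (Fin 5) ℂ :=
  C (4 : ℂ) * X 3 ^ 2 - C (4 : ℂ) * X 1 ^ 3 - X 0 ^ 3 * X 4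
    + C (3 : ℂ) * X 0 ^ 2 * X 1 * X 2

section EliminateLastVariable

variable {R : Type*} [CommRing R] {n : ℕ}

theorem exists_dvd_pow_mul_sub_rename_castSucc (a b : MvPolynomial (Fin n) R)
    (f : MvPolynomial (Fin (n + 1)) R) :
    ∃ (N : ℕ) (g : MvPolynomial (Fin n) R),
      rename Fin.castSucc b - rename Fin.castSucc a * X (Fin.last n) ∣
        rename Fin.castSucc a ^ N * f - rename Fin.castSucc g := by
  set r := rename Fin.castSucc b - rename Fin.castSucc a * X (Fin.last n)
  induction f using MvPolynomial.induction_on with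
  | C c => exact ⟨0, C c, by simp⟩
  | add f₁ f₂ ih₁ ih₂ =>
    obtain ⟨N₁, g₁, h₁⟩ := ih₁
    obtain ⟨N₂, g₂, h₂⟩ := ih₂
    refine ⟨N₁ + N₂, a ^ N₂ * g₁ + a ^ N₁ * g₂, ?_⟩
    convert dvd_add (h₁.mul_left (rename Fin.castSucc a ^ N₂))
      (h₂.mul_left (rename Fin.castSucc a ^ N₁)) using 1
    simp only [map_add, map_mul, map_pow]
    ring
  | mul_X f i ih =>
    obtain ⟨N, g, h⟩ := ih
    cases i using Fin.lastCases with
    | cast j =>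
      refine ⟨N, g * X j, ?_⟩
      convert h.mul_right (X j.castSucc) using 1
      simp only [map_mul, rename_X]
      ring
    | last =>
      -- `a · X (last n) ≡ b` modulo `r`: one more factor `a` trades the new variable for `b`
      refine ⟨N + 1, g * b, ?_⟩
      convert dvd_sub (h.mul_left (rename Fin.castSucc a * X (Fin.last n)))
        (dvd_mul_left r (rename Fin.castSucc g)) using 1
      simp only [r, map_mul]
      ring

end EliminateLastVariable

theorem rel_eq_rename_castSucc_sub :
    rel = rename Fin.castSucc (C 4 * X 3 ^ 2 - C 4 * X 1 ^ 3 + C 3 * X 0 ^ 2 * X 1 * X 2)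
      - rename Fin.castSucc (X 0 ^ 3 : MvPolynomial (Fin 4) ℂ) * X (Fin.last 4) := by
  simp only [rel, map_add, map_sub, map_mul, map_pow, rename_X, rename_C, Fin.reduceCastSucc,
    Fin.reduceLast]
  ring

theorem psi_rel : psi rel = 0 := by
  refine MvPolynomial.funext fun x => ?_
  simp only [psi, rel, aeval_eq_bind₁, map_add, map_sub, map_mul, map_pow, algHom_C, algebraMap_eq,
    bind₁_X_right, Matrix.cons_val, Matrix.cons_val_one, Matrix.cons_val_zero, eval_C, eval_X,
    map_zero]
  ring

theorem dvd_of_dvd_pow_mul_of_not_dvd {M : Type*} [CommMonoid M] [DecompositionMonoid M]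
    {p r f : M} {N : ℕ} (hp : Irreducible p) (hpr : ¬ p ∣ r) (h : r ∣ p ^ N * f) : r ∣ f :=
  (hp.isRelPrime_iff_not_dvd.2 hpr).pow_left.symm.dvd_of_dvd_mul_left h

theorem X_zero_not_dvd_rel : ¬ X 0 ∣ rel := by
  rintro ⟨g, hg⟩
  simpa [rel] using congrArg (eval ![0, 0, 0, 1, 0]) hg

theorem psi_comp_rename_castSucc_injective :
    Function.Injective (psi.comp (rename Fin.castSucc : MvPolynomial (Fin 4) ℂ →ₐ[ℂ] _)) := by
  let y (i : Fin 4) : FractionRing (MvPolynomial (Fin 4) ℂ) :=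
    algebraMap (MvPolynomial (Fin 4) ℂ) _ (X i)
  have hy₀ : y 0 ≠ 0 := (map_ne_zero_iff _ (IsFractionRing.injective _ _)).2 (X_ne_zero 0)
  -- On the slice `x₁ = 0` the images of `y₀, …, y₃` are `x₀, −x₀x₂, x₂² + x₀x₄/3, x₀²x₃/2`,
  -- which can be solved for `x₀, x₂, x₃, x₄` over the fraction field of `ℂ[y₀,…,y₃]`.
  let χ : MvPolynomial (Fin 5) ℂ →ₐ[ℂ] FractionRing (MvPolynomial (Fin 4) ℂ) :=
    aeval ![y 0, 0, -y 1 / y 0, 2 * y 3 / y 0 ^ 2, 3 * (y 2 - y 1 ^ 2 / y 0 ^ 2) / y 0]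
  have hχ : χ.comp (psi.comp (rename Fin.castSucc)) = IsScalarTower.toAlgHom ℂ _ _ := by
    refine algHom_ext fun i => ?_
    change χ (psi (rename _ (X i))) = y i
    fin_cases i <;> simp [χ, psi, map_ofNat]
    all_goals field_simp
    ring
  refine Function.Injective.of_comp (f := χ) ?_
  rw [← AlgHom.coe_comp, hχ]
  exact IsFractionRing.injective _ _

theorem rel_dvd_of_psi_eq_zero {f : MvPolynomial (Fin 5) ℂ} (hf : psi f = 0) : rel ∣ f := by
  obtain ⟨N, g, hdvd⟩ := rel_eq_rename_castSucc_sub ▸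
    exists_dvd_pow_mul_sub_rename_castSucc (X 0 ^ 3) _ f
  have hg : psi (rename Fin.castSucc g) = 0 := by
    obtain ⟨q, hq⟩ := hdvd
    simpa [hf, psi_rel] using congrArg psi hq
  rw [psi_comp_rename_castSucc_injective.eq_iff' (map_zero _) |>.1 hg, map_zero, sub_zero,
    map_pow, rename_X, ← pow_mul] at hdvd
  exact dvd_of_dvd_pow_mul_of_not_dvd X_prime.irreducible X_zero_not_dvd_rel hdvd

/-- The kernel of `ψ` is the principal ideal generated by
`4y₃² − 4y₁³ − y₀³y₄ + 3y₀²y₁y₂`; consequently the invariant ring of the `ℂ⁺`-action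
on `Sym⁴(ℂ²)` (the image of `ψ`) is isomorphic to
`ℂ[y₀,…,y₄]/(4y₃² − 4y₁³ − y₀³y₄ + 3y₀²y₁y₂)`, the coordinate ring of a degree-6
hypersurface in `ℙ(1,2,2,3,3)`. -/
theorem psi_ker_eq_span :
    RingHom.ker psi = Ideal.span ({rel} : Set (MvPolynomial (Fin 5) ℂ)) ∧
    Nonempty
      ((MvPolynomial (Fin 5) ℂ ⧸ Ideal.span ({rel} : Set (MvPolynomial (Fin 5) ℂ)))
        ≃ₐ[ℂ] psi.range) := by
  have hker : RingHom.ker psi = Ideal.span {rel} := by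
    ext f
    rw [RingHom.mem_ker, Ideal.mem_span_singleton]
    refine ⟨rel_dvd_of_psi_eq_zero, ?_⟩
    rintro ⟨q, rfl⟩
    rw [map_mul, psi_rel, zero_mul]
  exact ⟨hker, ⟨(Ideal.quotientEquivAlgOfEq ℂ hker.symm).trans (Ideal.quotientKerEquivRange psi)⟩⟩
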